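/- In the N=4 selfish-mining model with γ1 = γ2 = 1/2, θ1 = θ2 = 1/3 and symmetric selfish Hashrates α1 = α2 = α, the profitable threshold is approximately 21.48%: if 0.22 ≤ α < 1/3 then R_A⁴ > α (selfish mining is profitable), while if 0 < α ≤ 0.21 then R_A⁴ < α (selfish mining is unprofitable). -/
import Mathlib


/-- N=4 selfish-mining model: Alice's (unnormalized) revenue polynomial S1. -/
noncomputable def S1N4 (a1 a2 g1 g2 t1 t2 : ℝ) : ℝ :=
  let h := 1 - a1 - a2
  let b1 := g1 / (g1 + g2)
  4*a1^4*(1+h) + 3*a1^3*h^2 + 16*a1^4*a2 + 4*a1^2*h + 40*a1^4*a2^2*(1+2*a2)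
  + a1*a2*h*(1+g1+2*t1*h) + 10*a1^2*a2*h + 20*a1^3*a2*h*(3*a2+a1) + 15*a1^3*a2*h^2
  + 4*a1^4*a2^2*h*(1+h) + 4*a1^4*a2^3*h^2*(b1+20) + 5*a1^5*a2^3*h
  + 4*a1^4*a2^3*h*(a2+21) + 3*a1^3*a2^4*h^2*b1 + a1*h^2*g1 + 12*a1^2*a2^2*h^2*b1
  + a1^2*a2^2*h^3*b1*(3*a1+2*a2) + 6*a1^3*a2^3*h^2*(10*h*b1+1)

/-- N=4 selfish-mining model: Bob's (unnormalized) revenue polynomial S2. -/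
noncomputable def S2N4 (a1 a2 g1 g2 t1 t2 : ℝ) : ℝ :=
  let h := 1 - a1 - a2
  let b2 := g2 / (g1 + g2)
  4*a2^4*(1+h) + 3*a2^3*h^2 + 16*a1*a2^4 + 4*a2^2*h + 40*a1^2*a2^4*(1+2*a1)
  + a1*a2*h*(1+g2+2*t2*h) + 10*a1*a2^2*h + 20*a1*a2^3*h*(3*a1+a2) + 15*a1*a2^3*h^2
  + 4*a1^2*a2^4*h*(1+h) + 4*a1^3*a2^4*h^2*(b2+20) + 5*a1^3*a2^5*h
  + 4*a1^3*a2^4*h*(a1+21) + 3*a1^4*a2^3*h^2*b2 + a2*h^2*g2 + 12*a1^2*a2^2*h^2*b2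
  + a1^2*a2^2*h^3*b2*(2*a1+3*a2) + 6*a1^3*a2^3*h^2*(10*h*b2+1)

/-- N=4 selfish-mining model: Henry's (unnormalized) revenue polynomial Sh. -/
noncomputable def ShN4 (a1 a2 g1 g2 t1 t2 : ℝ) : ℝ :=
  let h := 1 - a1 - a2
  let b1 := g1 / (g1 + g2)
  let b2 := g2 / (g1 + g2)
  h + a1*h^2*(2-g1) + a2*h^2*(2-g2) + 2*a1*a2*h^2*(2-t1-t2) + a1*a2*h*(2-g1-g2)
  + a1^2*a2^2*h^2*(6+4*a1*a2) + a1^2*a2^3*h^3*(2*b1+b2) + a1^3*a2^2*h^3*(b1+2*b2)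
  + a1^3*a2^3*h*(a1+a2) + a1^3*a2^4*h^2*(2*b1+b2) + a1^4*a2^3*h^2*(b1+2*b2)
  + 20*a1^3*a2^3*h^3 + 2*a1^4*a2^4*h

/-- N=4 model: Alice's relative revenue R_A⁴. -/
noncomputable def RA4 (a1 a2 g1 g2 t1 t2 : ℝ) : ℝ :=
  S1N4 a1 a2 g1 g2 t1 t2 /
    (S1N4 a1 a2 g1 g2 t1 t2 + S2N4 a1 a2 g1 g2 t1 t2 + ShN4 a1 a2 g1 g2 t1 t2)

/-- N=4 model: Bob's relative revenue R_B⁴. -/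
noncomputable def RB4 (a1 a2 g1 g2 t1 t2 : ℝ) : ℝ :=
  S2N4 a1 a2 g1 g2 t1 t2 /
    (S1N4 a1 a2 g1 g2 t1 t2 + S2N4 a1 a2 g1 g2 t1 t2 + ShN4 a1 a2 g1 g2 t1 t2)

section N4Aux

private lemma n4_key (α : ℝ) :
    S1N4 α α (1/2) (1/2) (1/3) (1/3)
      - α * (S1N4 α α (1/2) (1/2) (1/3) (1/3) + S2N4 α α (1/2) (1/2) (1/3) (1/3)
          + ShN4 α α (1/2) (1/2) (1/3) (1/3))
    = α * (-3 + 13*α + 8*α^2 - 14*α^3 + 15*α^4 - 138*α^5 + 201*α^6 - 702*α^7 + 504*α^8) / 6 := by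
  simp only [S1N4, S2N4, ShN4]
  ring

private lemma n4_denom_pos (α : ℝ) (h0 : 0 < α) (h3 : α < 1/3) :
    0 < S1N4 α α (1/2) (1/2) (1/3) (1/3) + S2N4 α α (1/2) (1/2) (1/3) (1/3)
      + ShN4 α α (1/2) (1/2) (1/3) (1/3) := by
  have hD : S1N4 α α (1/2) (1/2) (1/3) (1/3) + S2N4 α α (1/2) (1/2) (1/3) (1/3)
      + ShN4 α α (1/2) (1/2) (1/3) (1/3)
      = 1 + 2*α + 2*α^3 + 16*α^4 + 16*α^5 + 16*α^6 + 4*α^7 - 8*α^8 := by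
    simp only [S1N4, S2N4, ShN4]; ring
  rw [hD]
  nlinarith [pow_pos h0 3, pow_pos h0 4, pow_pos h0 5, pow_pos h0 6, pow_pos h0 7,
    mul_pos (sub_pos.mpr h3) (pow_pos h0 7)]

private lemma n4_Q_pos (α : ℝ) (h1 : (0.22:ℝ) ≤ α) (h2 : α < 1/3) :
    0 < -3 + 13*α + 8*α^2 - 14*α^3 + 15*α^4 - 138*α^5 + 201*α^6 - 702*α^7 + 504*α^8 := by
  have h0 : (0:ℝ) ≤ α := by linarith
  have h13 : α ≤ 1/3 := le_of_lt h2
  have b2 : α^2 ≤ (1/3:ℝ)^2 := by nlinarith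
  have b3 : α^3 ≤ (1/3:ℝ)^3 := by nlinarith [pow_nonneg h0 2]
  have b4 : α^4 ≤ (1/3:ℝ)^4 := by nlinarith [pow_nonneg h0 3]
  have b6 : α^6 ≤ (1/3:ℝ)^6 := by nlinarith [pow_nonneg h0 5, pow_nonneg h0 4, b4]
  have hR : 0 < (1362833358823/97656250000 : ℝ) + (8482009893/1953125000)*α
      - (649362737/39062500)*α^2 - (9317067/781250)*α^3 - (1912347/15625)*α^4
      + (44346/625)*α^5 - (14778/25)*α^6 + 504*α^7 := by
    have b7 : (0:ℝ) ≤ α^7 := pow_nonneg h0 7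
    have b5 : (0:ℝ) ≤ α^5 := pow_nonneg h0 5
    nlinarith
  have hfac : -3 + 13*α + 8*α^2 - 14*α^3 + 15*α^4 - 138*α^5 + 201*α^6 - 702*α^7 + 504*α^8
      = 342729447053/4882812500000
        + (α - 11/50) * ((1362833358823/97656250000 : ℝ) + (8482009893/1953125000)*α
          - (649362737/39062500)*α^2 - (9317067/781250)*α^3 - (1912347/15625)*α^4
          + (44346/625)*α^5 - (14778/25)*α^6 + 504*α^7) := by ring
  rw [hfac]
  have hge : (0:ℝ) ≤ α - 11/50 := by norm_num at h1 ⊢; linarith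
  nlinarith [mul_nonneg hge (le_of_lt hR)]

private lemma n4_Q_neg (α : ℝ) (h1 : (0:ℝ) < α) (h2 : α ≤ 0.21) :
    -3 + 13*α + 8*α^2 - 14*α^3 + 15*α^4 - 138*α^5 + 201*α^6 - 702*α^7 + 504*α^8 < 0 := by
  have h0 : (0:ℝ) ≤ α := le_of_lt h1
  have h13 : α ≤ 1/3 := by norm_num at h2 ⊢; linarith
  have b2 : α^2 ≤ (1/3:ℝ)^2 := by nlinarith
  have b3 : α^3 ≤ (1/3:ℝ)^3 := by nlinarith [pow_nonneg h0 2]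
  have b4 : α^4 ≤ (1/3:ℝ)^4 := by nlinarith [pow_nonneg h0 3]
  have b6 : α^6 ≤ (1/3:ℝ)^6 := by nlinarith [pow_nonneg h0 5, pow_nonneg h0 4, b4]
  have hR : 0 < (87275570746279/6250000000000 : ℝ) + (286931940299/62500000000)*α
      - (10146098081/625000000)*α^2 - (66480861/6250000)*α^3 - (7630041/62500)*α^4
      + (47379/625)*α^5 - (14904/25)*α^6 + 504*α^7 := by
    have b7 : (0:ℝ) ≤ α^7 := pow_nonneg h0 7
    have b5 : (0:ℝ) ≤ α^5 := pow_nonneg h0 5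
    nlinarith
  have hfac : -3 + 13*α + 8*α^2 - 14*α^3 + 15*α^4 - 138*α^5 + 201*α^6 - 702*α^7 + 504*α^8
      = -42213014328141/625000000000000
        + (α - 21/100) * ((87275570746279/6250000000000 : ℝ) + (286931940299/62500000000)*α
          - (10146098081/625000000)*α^2 - (66480861/6250000)*α^3 - (7630041/62500)*α^4
          + (47379/625)*α^5 - (14904/25)*α^6 + 504*α^7) := by ring
  rw [hfac]
  have hle : α - 21/100 ≤ 0 := by norm_num at h2 ⊢; linarith
  nlinarith [mul_nonpos_of_nonpos_of_nonneg hle (le_of_lt hR)]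

end N4Aux

/-- In the N=4 model with γ1=γ2=1/2, θ1=θ2=1/3 and symmetric Hashrates α1=α2=α,
the profitable threshold is approximately 21.48%. -/
theorem n4_symmetric_threshold (α : ℝ) :
    ((0.22 ≤ α ∧ α < 1/3) → RA4 α α (1/2) (1/2) (1/3) (1/3) > α) ∧
    ((0 < α ∧ α ≤ 0.21) → RA4 α α (1/2) (1/2) (1/3) (1/3) < α) := by
  constructor
  · rintro ⟨h1, h2⟩
    have h0 : (0:ℝ) < α := by norm_num at h1 ⊢; linarith
    have hD := n4_denom_pos α h0 h2
    rw [RA4, gt_iff_lt, lt_div_iff₀ hD]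
    have hQ := n4_Q_pos α h1 h2
    have hk := n4_key α
    nlinarith [mul_pos h0 hQ]
  · rintro ⟨h1, h2⟩
    have h3 : α < 1/3 := by norm_num at h2 ⊢; linarith
    have hD := n4_denom_pos α h1 h3
    rw [RA4, div_lt_iff₀ hD]
    have hQ := n4_Q_neg α h1 h2
    have hk := n4_key α
    nlinarith [mul_pos h1 (neg_pos.mpr hQ)]
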